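/- Let a > b > 0, r = a*b/(a+b), and k = 1 + 2*a*b/(a+b)². For any triangle P₁P₂P₃ with all vertices on the ellipse x²/a² + y²/b² = 1, whose three side lines each have distance exactly r from the origin, and whose interior contains the origin, the cosines c₁, c₂ of the interior angles at P₁ and P₂ satisfy the implicit cubic relation 2·c₁·c₂·(c₁ + c₂) − 2·(c₁² + c₂²) − 2·(k+1)·c₁·c₂ + 2·k·(c₁ + c₂) + 1 − k² = 0. -/

import Mathlib

/-!
Write the vertices as `Pᵢ = (a cos θᵢ, b sin θᵢ)`. The cross product `Pᵢ × Pⱼ = ab sin (θⱼ - θᵢ)`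
is twice the signed area of `O Pᵢ Pⱼ`, which is `± r |PᵢPⱼ|` when the side is tangent to the circle;
hence `|PᵢPⱼ| = (a + b) |sin (θⱼ - θᵢ)|`, and by the law of sines every triangle of the family has
circumradius `R = (a + b) / 2`. Since the origin lies inside the triangle, `r` is its inradius.
Carnot's theorem `cos A + cos B + cos C = 1 + r / R = k`, together with the identity
`cos² A + cos² B + cos² C + 2 cos A cos B cos C = 1` for `A + B + C = π`, gives the cubic once
`cos C` is eliminated.
-/

open EuclideanGeometry
open Real

local notation "ℝ²" => EuclideanSpace ℝ (Fin 2)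

/-- Sixteen times the squared area of a triangle with side lengths `x, y, z` (Heron's formula). -/
def heron (x y z : ℝ) : ℝ :=
  2 * (x ^ 2 * y ^ 2 + y ^ 2 * z ^ 2 + z ^ 2 * x ^ 2) - (x ^ 4 + y ^ 4 + z ^ 4)

theorem heron_mul_abs (c x y z : ℝ) :
    heron (c * |x|) (c * |y|) (c * |z|) = c ^ 4 * heron x y z := by
  simp only [heron, mul_pow, sq_abs, (by decide : Even 4).pow_abs]
  ring

theorem cos_sq_add_cos_sq_add_cos_sq_add_two_mul_cos_mul_cos_mul_cos {A B C : ℝ}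
    (h : A + B + C = π) :
    cos A ^ 2 + cos B ^ 2 + cos C ^ 2 + 2 * cos A * cos B * cos C = 1 := by
  have hC : cos C = sin A * sin B - cos A * cos B := by
    rw [show C = π - (A + B) by linarith, cos_pi_sub, cos_add]
    ring
  rw [hC]
  linear_combination sin B ^ 2 * sin_sq_add_cos_sq A + (1 - cos A ^ 2) * sin_sq_add_cos_sq B

/-- Carnot's theorem: `hheron` says that `Δ` is the area of the triangle, `hin` and `hcirc` that
`ρ` and `R` are its inradius and circumradius. -/
theorem cos_angle_add_cos_angle_add_cos_angle_eq_one_add_div {V P : Type*}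
    [NormedAddCommGroup V] [InnerProductSpace ℝ V] [MetricSpace P] [NormedAddTorsor V P]
    {P₁ P₂ P₃ : P} {ρ R Δ : ℝ} (h₁₂ : P₁ ≠ P₂) (hρ : ρ ≠ 0) (hR : R ≠ 0)
    (hheron : heron (dist P₁ P₂) (dist P₂ P₃) (dist P₃ P₁) = 16 * Δ ^ 2)
    (hin : ρ * (dist P₁ P₂ + dist P₂ P₃ + dist P₃ P₁) = 2 * Δ)
    (hcirc : dist P₁ P₂ * dist P₂ P₃ * dist P₃ P₁ = 4 * R * Δ) :
    cos (∠ P₂ P₁ P₃) + cos (∠ P₁ P₂ P₃) + cos (∠ P₁ P₃ P₂) = 1 + ρ / R := by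
  have h₁ := law_cos P₂ P₁ P₃
  have h₂ := law_cos P₁ P₂ P₃
  have h₃ := law_cos P₁ P₃ P₂
  simp only [dist_comm P₂ P₁, dist_comm P₁ P₃, dist_comm P₃ P₂] at h₁ h₂ h₃
  set ℓ₁₂ := dist P₁ P₂
  set ℓ₂₃ := dist P₂ P₃
  set ℓ₃₁ := dist P₃ P₁
  have hperim : 0 < ℓ₁₂ + ℓ₂₃ + ℓ₃₁ := by positivity [dist_pos.mpr h₁₂]
  have hΔ : Δ ≠ 0 := by
    rintro rfl
    exact mul_ne_zero hρ hperim.ne' (by simpa using hin)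
  -- by the law of cosines, `2 ℓ₁₂ ℓ₂₃ ℓ₃₁ (cos A + cos B + cos C - 1) (ℓ₁₂ + ℓ₂₃ + ℓ₃₁)`
  -- is `heron ℓ₁₂ ℓ₂₃ ℓ₃₁`
  have hcarnot : 8 * Δ * (ℓ₁₂ + ℓ₂₃ + ℓ₃₁) *
      (R * (cos (∠ P₂ P₁ P₃) + cos (∠ P₁ P₂ P₃) + cos (∠ P₁ P₃ P₂) - 1) - ρ) = 0 := by
    unfold heron at hheron
    linear_combination (ℓ₁₂ + ℓ₂₃ + ℓ₃₁) * (ℓ₂₃ * h₁ + ℓ₃₁ * h₂ + ℓ₁₂ * h₃) + hheron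
      - 2 * (ℓ₁₂ + ℓ₂₃ + ℓ₃₁) * (cos (∠ P₂ P₁ P₃) + cos (∠ P₁ P₂ P₃) + cos (∠ P₁ P₃ P₂) - 1) * hcirc
      - 8 * Δ * hin
  have := (mul_eq_zero.mp hcarnot).resolve_left (by positivity)
  field_simp
  linarith

def cross (p q : ℝ²) : ℝ := p 0 * q 1 - p 1 * q 0

theorem dist_sq_eq_sub_sq_add_sub_sq (p q : ℝ²) :
    dist p q ^ 2 = (p 0 - q 0) ^ 2 + (p 1 - q 1) ^ 2 := by
  simp [EuclideanSpace.dist_sq_eq, Fin.sum_univ_two, Real.dist_eq, sq_abs]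

/-- Heron's formula in Cartesian form: the sum of the three cross products is twice the signed
area. -/
theorem heron_dist_eq (p₁ p₂ p₃ : ℝ²) :
    heron (dist p₁ p₂) (dist p₂ p₃) (dist p₃ p₁) =
      4 * (cross p₁ p₂ + cross p₂ p₃ + cross p₃ p₁) ^ 2 := by
  simp only [heron, show ∀ x : ℝ, x ^ 4 = (x ^ 2) ^ 2 by intro x; ring,
    dist_sq_eq_sub_sq_add_sub_sq, cross]
  ring

theorem abs_cross_eq_infDist_mul_dist (p q : ℝ²) :
    |cross p q| = Metric.infDist 0 (line[ℝ, p, q] : Set ℝ²) * dist p q := by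
  rw [← dist_orthogonalProjection_eq_infDist]
  set m : ℝ² := ↑(orthogonalProjection line[ℝ, p, q] (0 : ℝ²))
  obtain ⟨t, ht⟩ : ∃ t : ℝ, t • (q - p) = m - p := by
    have hm : m ∈ line[ℝ, p, q] := orthogonalProjection_mem _
    rwa [← vsub_vadd m p, vadd_left_mem_affineSpan_pair] at hm
  have hdir : q - p ∈ line[ℝ, p, q].direction := by
    rw [direction_affineSpan]
    exact vsub_rev_mem_vectorSpan_pair ℝ p q
  have horth : inner ℝ (q - p) (0 - m) = 0 := Submodule.inner_right_of_mem_orthogonal hdir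
    (vsub_orthogonalProjection_mem_direction_orthogonal _ _)
  rw [eq_sub_iff_add_eq] at ht
  rw [← ht] at horth ⊢
  simp only [PiLp.inner_apply, Fin.sum_univ_two, PiLp.sub_apply, PiLp.add_apply, PiLp.smul_apply,
    PiLp.zero_apply, smul_eq_mul, RCLike.inner_apply, conj_trivial] at horth
  refine (sq_eq_sq₀ (abs_nonneg _) (by positivity)).mp ?_
  rw [sq_abs, mul_pow, dist_sq_eq_sub_sq_add_sub_sq, dist_sq_eq_sub_sq_add_sub_sq]
  simp only [cross, PiLp.zero_apply, PiLp.add_apply, PiLp.smul_apply, PiLp.sub_apply, smul_eq_mul]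
  -- at the foot `m` of the perpendicular, `cross p q = cross m (q - p)` and `m ⟂ q - p`
  linear_combination
    ((t * (q 0 - p 0) + p 0) * (q 0 - p 0) + (t * (q 1 - p 1) + p 1) * (q 1 - p 1)) * horth

theorem exists_weights_of_mem_convexHull_triple {E : Type*} [AddCommGroup E] [Module ℝ E]
    {x p₁ p₂ p₃ : E} (h : x ∈ convexHull ℝ {p₁, p₂, p₃}) :
    ∃ w₁ w₂ w₃ : ℝ, 0 ≤ w₁ ∧ 0 ≤ w₂ ∧ 0 ≤ w₃ ∧ w₁ + w₂ + w₃ = 1 ∧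
      w₁ • p₁ + w₂ • p₂ + w₃ • p₃ = x := by
  rw [convexHull_insert (by simp), convexJoin_singleton_left, Set.mem_iUnion₂] at h
  obtain ⟨y, hy, w₁, t, hw₁, ht, hsum, rfl⟩ := h
  rw [convexHull_pair] at hy
  obtain ⟨w₂, w₃, hw₂, hw₃, hsum', rfl⟩ := hy
  refine ⟨w₁, t * w₂, t * w₃, hw₁, by positivity, by positivity,
    by linear_combination hsum + t * hsum', ?_⟩
  module

/-- Barycentric coordinates are ratios of areas. -/
theorem cross_eq_mul_of_weights {p₁ p₂ p₃ : ℝ²} {w₁ w₂ w₃ : ℝ} (hw : w₁ + w₂ + w₃ = 1)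
    (h : w₁ • p₁ + w₂ • p₂ + w₃ • p₃ = 0) :
    cross p₂ p₃ = w₁ * (cross p₁ p₂ + cross p₂ p₃ + cross p₃ p₁) := by
  have h₀ := congrArg (· 0) h
  have h₁ := congrArg (· 1) h
  simp only [PiLp.add_apply, PiLp.smul_apply, smul_eq_mul, PiLp.zero_apply] at h₀ h₁
  linear_combination (norm := (simp only [cross]; ring1))
    (p₃ 1 - p₂ 1) * h₀ - (p₃ 0 - p₂ 0) * h₁ - cross p₂ p₃ * hw

/-- The origin cuts the triangle into the three triangles `0 pᵢ pⱼ`. -/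
theorem abs_cross_add_abs_cross_add_abs_cross {p₁ p₂ p₃ : ℝ²}
    (h : (0 : ℝ²) ∈ convexHull ℝ {p₁, p₂, p₃}) :
    |cross p₁ p₂| + |cross p₂ p₃| + |cross p₃ p₁| = |cross p₁ p₂ + cross p₂ p₃ + cross p₃ p₁| := by
  obtain ⟨w₁, w₂, w₃, hw₁, hw₂, hw₃, hw, h0⟩ := exists_weights_of_mem_convexHull_triple h
  set S := cross p₁ p₂ + cross p₂ p₃ + cross p₃ p₁
  have h₂₃ : cross p₂ p₃ = w₁ * S := cross_eq_mul_of_weights hw h0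
  have h₃₁ : cross p₃ p₁ = w₂ * S := by
    rw [cross_eq_mul_of_weights (p₁ := p₂) (w₁ := w₂) (w₂ := w₃) (w₃ := w₁) (by linarith)
      (by rw [← h0]; abel)]
    ring
  have h₁₂ : cross p₁ p₂ = w₃ * S := by
    rw [cross_eq_mul_of_weights (p₁ := p₃) (w₁ := w₃) (w₂ := w₁) (w₃ := w₂) (by linarith)
      (by rw [← h0]; abel)]
    ring
  rw [h₁₂, h₂₃, h₃₁, abs_mul, abs_mul, abs_mul, abs_of_nonneg hw₁, abs_of_nonneg hw₂,
    abs_of_nonneg hw₃]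
  linear_combination |S| * hw

/-- For `p = (a cos θ, b sin θ)` on the ellipse, this is `(cos θ, sin θ)`. -/
noncomputable def eccentricPoint (a b : ℝ) (p : ℝ²) : ℝ² := !₂[p 0 / a, p 1 / b]

theorem eccentricPoint_sq_add_sq {a b : ℝ} {p : ℝ²}
    (hp : p 0 ^ 2 / a ^ 2 + p 1 ^ 2 / b ^ 2 = 1) :
    eccentricPoint a b p 0 ^ 2 + eccentricPoint a b p 1 ^ 2 = 1 := by
  simpa [eccentricPoint, div_pow] using hp

theorem cross_eq_mul_cross_eccentricPoint {a b : ℝ} (ha : a ≠ 0) (hb : b ≠ 0) (p q : ℝ²) :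
    cross p q = a * b * cross (eccentricPoint a b p) (eccentricPoint a b q) := by
  simp only [cross, eccentricPoint, Matrix.cons_val_zero, Matrix.cons_val_one]
  field_simp

section UnitVectors

variable {u v w : ℝ²}

theorem cross_sq_add_inner_sq (hu : u 0 ^ 2 + u 1 ^ 2 = 1) (hv : v 0 ^ 2 + v 1 ^ 2 = 1) :
    cross u v ^ 2 + (u 0 * v 0 + u 1 * v 1) ^ 2 = 1 := by
  linear_combination (norm := (simp only [cross]; ring1)) (v 0 ^ 2 + v 1 ^ 2) * hu + hv

theorem cross_sq_add_cross_sq_sub_cross_sq (hu : u 0 ^ 2 + u 1 ^ 2 = 1)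
    (hv : v 0 ^ 2 + v 1 ^ 2 = 1) (hw : w 0 ^ 2 + w 1 ^ 2 = 1) :
    cross v w ^ 2 + cross w u ^ 2 - cross u v ^ 2 =
      -2 * cross v w * cross w u * (u 0 * v 0 + u 1 * v 1) := by
  linear_combination (norm := (simp only [cross]; ring1))
    -cross v w ^ 2 * hu - cross w u ^ 2 * hv + cross u v ^ 2 * hw

/-- Up to sign, `cross u v`, `cross v w`, `cross w u` are the sines of three angles summing to
`π`, so this is the law of sines for a triangle of circumradius `1 / 2`. -/
theorem heron_cross (hu : u 0 ^ 2 + u 1 ^ 2 = 1) (hv : v 0 ^ 2 + v 1 ^ 2 = 1)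
    (hw : w 0 ^ 2 + w 1 ^ 2 = 1) :
    heron (cross u v) (cross v w) (cross w u) = 4 * (cross u v * cross v w * cross w u) ^ 2 := by
  have h := cross_sq_add_cross_sq_sub_cross_sq hu hv hw
  have h' := cross_sq_add_inner_sq hu hv
  unfold heron
  linear_combination
    -(cross v w ^ 2 + cross w u ^ 2 - cross u v ^ 2 -
      2 * cross v w * cross w u * (u 0 * v 0 + u 1 * v 1)) * h -
    4 * cross v w ^ 2 * cross w u ^ 2 * h'

end UnitVectors

section Ellipse

variable {a b r : ℝ}

theorem dist_eq_mul_abs_cross_eccentricPoint (ha : 0 < a) (hb : 0 < b)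
    (hr : r * (a + b) = a * b) (hr₀ : 0 < r) {p q : ℝ²}
    (hd : Metric.infDist 0 (line[ℝ, p, q] : Set ℝ²) = r) :
    dist p q = (a + b) * |cross (eccentricPoint a b p) (eccentricPoint a b q)| := by
  have h := abs_cross_eq_infDist_mul_dist p q
  rw [hd, cross_eq_mul_cross_eccentricPoint ha.ne' hb.ne', abs_mul,
    abs_of_pos (mul_pos ha hb), ← hr] at h
  exact mul_left_cancel₀ hr₀.ne' (by linear_combination -h)

/-- The product of the sides is `4 R Δ` with circumradius `R = (a + b) / 2`. -/
theorem dist_mul_dist_mul_dist_eq_of_tangent (ha : 0 < a) (hb : 0 < b)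
    (hr : r * (a + b) = a * b) (hr₀ : 0 < r) {P₁ P₂ P₃ : ℝ²}
    (hE₁ : P₁ 0 ^ 2 / a ^ 2 + P₁ 1 ^ 2 / b ^ 2 = 1) (hE₂ : P₂ 0 ^ 2 / a ^ 2 + P₂ 1 ^ 2 / b ^ 2 = 1)
    (hE₃ : P₃ 0 ^ 2 / a ^ 2 + P₃ 1 ^ 2 / b ^ 2 = 1)
    (hd₁ : Metric.infDist 0 (line[ℝ, P₁, P₂] : Set ℝ²) = r)
    (hd₂ : Metric.infDist 0 (line[ℝ, P₂, P₃] : Set ℝ²) = r)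
    (hd₃ : Metric.infDist 0 (line[ℝ, P₃, P₁] : Set ℝ²) = r) :
    dist P₁ P₂ * dist P₂ P₃ * dist P₃ P₁ =
      (a + b) * |cross P₁ P₂ + cross P₂ P₃ + cross P₃ P₁| := by
  have hsq : (dist P₁ P₂ * dist P₂ P₃ * dist P₃ P₁) ^ 2 =
      ((a + b) / 2) ^ 2 * heron (dist P₁ P₂) (dist P₂ P₃) (dist P₃ P₁) := by
    rw [dist_eq_mul_abs_cross_eccentricPoint ha hb hr hr₀ hd₁,
      dist_eq_mul_abs_cross_eccentricPoint ha hb hr hr₀ hd₂,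
      dist_eq_mul_abs_cross_eccentricPoint ha hb hr hr₀ hd₃, heron_mul_abs,
      heron_cross (eccentricPoint_sq_add_sq hE₁) (eccentricPoint_sq_add_sq hE₂)
        (eccentricPoint_sq_add_sq hE₃)]
    simp only [mul_pow, sq_abs]
    ring
  rw [heron_dist_eq] at hsq
  refine (sq_eq_sq₀ (by positivity) (by positivity)).mp ?_
  rw [hsq, mul_pow, sq_abs]
  ring

end Ellipse

theorem incircle_family_cubic (a b : ℝ) (hb : 0 < b) (hab : b < a)
    (r k : ℝ) (hr : r = a * b / (a + b)) (hk : k = 1 + 2 * a * b / (a + b) ^ 2)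
    (P₁ P₂ P₃ : EuclideanSpace ℝ (Fin 2))
    (hind : AffineIndependent ℝ ![P₁, P₂, P₃])
    (hE₁ : (P₁ 0) ^ 2 / a ^ 2 + (P₁ 1) ^ 2 / b ^ 2 = 1)
    (hE₂ : (P₂ 0) ^ 2 / a ^ 2 + (P₂ 1) ^ 2 / b ^ 2 = 1)
    (hE₃ : (P₃ 0) ^ 2 / a ^ 2 + (P₃ 1) ^ 2 / b ^ 2 = 1)
    (hd₁ : Metric.infDist 0 (affineSpan ℝ {P₁, P₂} : Set (EuclideanSpace ℝ (Fin 2))) = r)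
    (hd₂ : Metric.infDist 0 (affineSpan ℝ {P₂, P₃} : Set (EuclideanSpace ℝ (Fin 2))) = r)
    (hd₃ : Metric.infDist 0 (affineSpan ℝ {P₃, P₁} : Set (EuclideanSpace ℝ (Fin 2))) = r)
    (h0 : (0 : EuclideanSpace ℝ (Fin 2)) ∈
      interior (convexHull ℝ ({P₁, P₂, P₃} : Set (EuclideanSpace ℝ (Fin 2)))))
    (c₁ c₂ : ℝ) (hc₁ : c₁ = Real.cos (∠ P₂ P₁ P₃)) (hc₂ : c₂ = Real.cos (∠ P₁ P₂ P₃)) :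
    2 * c₁ * c₂ * (c₁ + c₂) - 2 * (c₁ ^ 2 + c₂ ^ 2) - 2 * (k + 1) * c₁ * c₂ +
      2 * k * (c₁ + c₂) + 1 - k ^ 2 = 0 := by
  have ha : 0 < a := hb.trans hab
  have hr₀ : 0 < r := by rw [hr]; positivity
  have hrab : r * (a + b) = a * b := by rw [hr]; field_simp
  have h₁₂ : P₁ ≠ P₂ := by simpa using hind.injective.ne (show (0 : Fin 3) ≠ 1 by decide)
  have hin : r * (dist P₁ P₂ + dist P₂ P₃ + dist P₃ P₁) =
      2 * (|cross P₁ P₂ + cross P₂ P₃ + cross P₃ P₁| / 2) := by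
    rw [← abs_cross_add_abs_cross_add_abs_cross (interior_subset h0),
      abs_cross_eq_infDist_mul_dist, abs_cross_eq_infDist_mul_dist,
      abs_cross_eq_infDist_mul_dist, hd₁, hd₂, hd₃]
    ring
  have hsum := cos_angle_add_cos_angle_add_cos_angle_eq_one_add_div h₁₂ hr₀.ne'
    (R := (a + b) / 2) (by positivity) (by rw [heron_dist_eq, div_pow, sq_abs]; ring) hin
    (by rw [dist_mul_dist_mul_dist_eq_of_tangent ha hb hrab hr₀ hE₁ hE₂ hE₃ hd₁ hd₂ hd₃]; ring)
  have hangles : ∠ P₂ P₁ P₃ + ∠ P₁ P₂ P₃ + ∠ P₁ P₃ P₂ = π := by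
    rw [angle_comm P₂ P₁ P₃, angle_comm P₁ P₃ P₂]
    linarith [angle_add_angle_add_angle_eq_pi P₃ h₁₂.symm]
  have hid := cos_sq_add_cos_sq_add_cos_sq_add_two_mul_cos_mul_cos_mul_cos hangles
  have hk' : 1 + r / ((a + b) / 2) = k := by rw [hk, hr]; field_simp
  rw [← hc₁, ← hc₂] at hsum hid
  rw [hk'] at hsum
  linear_combination -hid + (cos (∠ P₁ P₃ P₂) + k - c₁ - c₂ + 2 * c₁ * c₂) * hsum
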